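/- If T is nonexpansive with a fixed point and α ∈ (0,1), then the KM sequence x(k+1) = (1-α)x(k) + αTx(k) converges weakly to a fixed point of T (in finite dimensions, converges). -/

import Mathlib

/-!
For a fixed point `q`, the identity
`‖(1 - α) a + α b‖² = (1 - α) ‖a‖² + α ‖b‖² - α (1 - α) ‖a - b‖²` gives
`‖x (k+1) - q‖² + α (1 - α) ‖x k - T (x k)‖² ≤ ‖x k - q‖²`: the sequence is Fejér monotone
with respect to `Fix T` and the residuals `x k - T (x k)` are square-summable. A bounded sequence
has weakly convergent subsequences, every weak cluster point is fixed because `I - T` is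
demiclosed at `0`, and Opial's argument shows there is only one: for two fixed points `a`, `b`
the difference `‖x k - a‖² - ‖x k - b‖²` converges, hence so does `⟪a - b, x k⟫`.
-/

open Filter Topology Function RealInnerProductSpace

section

variable {H : Type*} [NormedAddCommGroup H] [InnerProductSpace ℝ H]

theorem norm_one_sub_smul_add_smul_sq (α : ℝ) (a b : H) :
    ‖(1 - α) • a + α • b‖ ^ 2 = (1 - α) * ‖a‖ ^ 2 + α * ‖b‖ ^ 2 - α * (1 - α) * ‖a - b‖ ^ 2 := by
  simp only [← real_inner_self_eq_norm_sq, inner_add_left, inner_add_right, inner_sub_left,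
    inner_sub_right, real_inner_smul_left, real_inner_smul_right, real_inner_comm a b]
  ring

theorem summable_of_succ_add_le {a b : ℕ → ℝ} (ha : ∀ k, 0 ≤ a k) (hb : ∀ k, 0 ≤ b k)
    (h : ∀ k, a (k + 1) + b k ≤ a k) : Summable b := by
  refine summable_of_sum_range_le hb (c := a 0) fun N => ?_
  have htele : ∀ N, ∑ k ∈ Finset.range N, b k ≤ a 0 - a N := by
    intro N
    induction N with
    | zero => simp
    | succ n ih => rw [Finset.sum_range_succ]; linarith [h n]
  linarith [htele N, ha N]

theorem norm_le_of_antitone_norm_sub {E : Type*} [SeminormedAddGroup E] {u : ℕ → E} {p : E}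
    (h : Antitone fun k => ‖u k - p‖) (k : ℕ) : ‖u k‖ ≤ ‖p‖ + ‖u 0 - p‖ :=
  (norm_le_norm_add_norm_sub' (u k) p).trans (by gcongr; exact h (Nat.zero_le k))

theorem exists_subseq_weak_tendsto_of_norm_le [CompleteSpace H] {u : ℕ → H} {C : ℝ}
    (hu : ∀ n, ‖u n‖ ≤ C) :
    ∃ z : H, ∃ φ : ℕ → ℕ, StrictMono φ ∧
      ∀ f : H →L[ℝ] ℝ, Tendsto (fun j => f (u (φ j))) atTop (𝓝 (f z)) := by
  set K := (Submodule.span ℝ (Set.range u)).topologicalClosure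
  have : TopologicalSpace.SeparableSpace K := by
    have := (Set.countable_range u).isSeparable.span (R := ℝ) |>.closure
    rw [← Submodule.topologicalClosure_coe] at this
    exact this.separableSpace
  let v : ℕ → K := fun n =>
    ⟨u n, Submodule.le_topologicalClosure _ (Submodule.subset_span ⟨n, rfl⟩)⟩
  -- sequential Banach–Alaoglu for `u`, seen in `StrongDual ℝ K` through the Riesz isometry
  obtain ⟨a, -, φ, hφ, ha⟩ := WeakDual.isSeqCompact_closedBall ℝ K 0 C
    (x := fun n => StrongDual.toWeakDual (InnerProductSpace.toDual ℝ K (v n)))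
    fun n => by simpa [v] using hu n
  rw [tendsto_iff_forall_eval_tendsto_topDualPairing] at ha
  refine ⟨(InnerProductSpace.toDual ℝ K).symm (WeakDual.toStrongDual a), φ, hφ, fun f => ?_⟩
  set w := (InnerProductSpace.toDual ℝ K).symm (f.comp K.subtypeL)
  have hf : ∀ y : K, f y = ⟪y, w⟫ := fun y => by
    rw [real_inner_comm, InnerProductSpace.toDual_symm_apply]; rfl
  convert ha w using 2 with j
  · exact hf (v (φ j))
  · rw [hf]; exact InnerProductSpace.toDual_symm_apply

theorem eq_of_weak_tendsto_of_tendsto_norm_sub {u : ℕ → H} {a b : H} {La Lb : ℝ}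
    {ψa ψb : ℕ → ℕ} (ha : Tendsto (fun k => ‖u k - a‖) atTop (𝓝 La))
    (hb : Tendsto (fun k => ‖u k - b‖) atTop (𝓝 Lb))
    (hψa : Tendsto ψa atTop atTop) (hψb : Tendsto ψb atTop atTop)
    (hwa : ∀ f : H →L[ℝ] ℝ, Tendsto (fun j => f (u (ψa j))) atTop (𝓝 (f a)))
    (hwb : ∀ f : H →L[ℝ] ℝ, Tendsto (fun j => f (u (ψb j))) atTop (𝓝 (f b))) : a = b := by
  have hinner : ∀ k, ⟪a - b, u k⟫ = (‖u k - b‖ ^ 2 - ‖u k - a‖ ^ 2 + ‖a‖ ^ 2 - ‖b‖ ^ 2) / 2 := by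
    intro k
    rw [norm_sub_sq_real, norm_sub_sq_real, inner_sub_left, real_inner_comm a, real_inner_comm b]
    ring
  have hconv : Tendsto (fun k => ⟪a - b, u k⟫) atTop
      (𝓝 ((Lb ^ 2 - La ^ 2 + ‖a‖ ^ 2 - ‖b‖ ^ 2) / 2)) := by
    simp only [hinner]
    exact ((((hb.pow 2).sub (ha.pow 2)).add_const _).sub_const _).div_const 2
  have h₁ := tendsto_nhds_unique (hwa (innerSL ℝ (a - b))) (hconv.comp hψa)
  have h₂ := tendsto_nhds_unique (hwb (innerSL ℝ (a - b))) (hconv.comp hψb)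
  simp only [innerSL_apply_apply] at h₁ h₂
  rw [← sub_eq_zero, ← inner_self_eq_zero (𝕜 := ℝ), inner_sub_right, h₁, h₂, sub_self]

theorem exists_weak_tendsto_of_antitone_norm_sub [CompleteSpace H] {S : Set H} {u : ℕ → H}
    (hS : S.Nonempty) (hfejer : ∀ q ∈ S, Antitone fun k => ‖u k - q‖)
    (hcluster : ∀ (z : H) (ψ : ℕ → ℕ), Tendsto ψ atTop atTop →
      (∀ f : H →L[ℝ] ℝ, Tendsto (fun j => f (u (ψ j))) atTop (𝓝 (f z))) → z ∈ S) :
    ∃ z ∈ S, ∀ f : H →L[ℝ] ℝ, Tendsto (fun k => f (u k)) atTop (𝓝 (f z)) := by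
  obtain ⟨p, hp⟩ := hS
  have hbdd := norm_le_of_antitone_norm_sub (hfejer p hp)
  have hlim : ∀ q ∈ S, Tendsto (fun k => ‖u k - q‖) atTop (𝓝 (⨅ k, ‖u k - q‖)) :=
    fun q hq => tendsto_atTop_ciInf (hfejer q hq) ⟨0, by rintro _ ⟨k, rfl⟩; exact norm_nonneg _⟩
  obtain ⟨z, φ, hφ, hzφ⟩ := exists_subseq_weak_tendsto_of_norm_le hbdd
  have hz := hcluster z φ hφ.tendsto_atTop hzφ
  refine ⟨z, hz, fun f => tendsto_of_subseq_tendsto fun ns hns => ?_⟩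
  obtain ⟨z', ψ, hψ, hz'ψ⟩ := exists_subseq_weak_tendsto_of_norm_le (u := u ∘ ns) fun j => hbdd _
  have hnsψ := hns.comp hψ.tendsto_atTop
  have hz' := hcluster z' _ hnsψ hz'ψ
  obtain rfl := eq_of_weak_tendsto_of_tendsto_norm_sub (hlim z' hz') (hlim z hz) hnsψ
    hφ.tendsto_atTop hz'ψ hzφ
  exact ⟨ψ, hz'ψ f⟩

theorem LipschitzWith.isFixedPt_of_weak_tendsto {T : H → H} (hT : LipschitzWith 1 T)
    {u : ℕ → H} {z : H} {C : ℝ} (hu : ∀ k, ‖u k‖ ≤ C)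
    (hw : ∀ f : H →L[ℝ] ℝ, Tendsto (fun k => f (u k)) atTop (𝓝 (f z)))
    (hres : Tendsto (fun k => ‖u k - T (u k)‖) atTop (𝓝 0)) : IsFixedPt T z := by
  set ε := fun k => ‖u k - T (u k)‖
  have hbound : ∀ k, ‖z - T z‖ ^ 2 ≤ ε k * (ε k + 2 * (C + ‖z‖)) - 2 * ⟪z - T z, u k - z⟫ := by
    intro k
    have hexpand : ‖u k - T z‖ ^ 2 = ‖u k - z‖ ^ 2 + 2 * ⟪z - T z, u k - z⟫ + ‖z - T z‖ ^ 2 := by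
      rw [show u k - T z = (u k - z) + (z - T z) by abel, norm_add_sq_real, real_inner_comm]
    have hnonexp : ‖u k - T z‖ ≤ ε k + ‖u k - z‖ := calc
      ‖u k - T z‖ ≤ ‖u k - T (u k)‖ + ‖T (u k) - T z‖ := norm_sub_le_norm_sub_add_norm_sub _ _ _
      _ ≤ ε k + ‖u k - z‖ := add_le_add le_rfl (by simpa using hT.norm_sub_le (u k) z)
    have hdist : ‖u k - z‖ ≤ C + ‖z‖ := (_root_.norm_sub_le _ _).trans (by linarith [hu k])
    have hε : 0 ≤ ε k := norm_nonneg _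
    nlinarith [pow_le_pow_left₀ (norm_nonneg _) hnonexp 2, norm_nonneg (u k - z)]
  have hweak : Tendsto (fun k => ⟪z - T z, u k - z⟫) atTop (𝓝 0) := by
    have := (hw (innerSL ℝ (z - T z))).sub_const ⟪z - T z, z⟫
    simpa only [innerSL_apply_apply, ← inner_sub_right, sub_self] using this
  have hrhs : Tendsto (fun k => ε k * (ε k + 2 * (C + ‖z‖)) - 2 * ⟪z - T z, u k - z⟫) atTop
      (𝓝 0) := by
    simpa using (hres.mul (hres.add_const _)).sub (hweak.const_mul 2)
  have hsq : ‖z - T z‖ ^ 2 ≤ 0 := ge_of_tendsto' hrhs hbound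
  exact (sub_eq_zero.mp (by simpa using hsq)).symm

section KrasnoselskiiMann

variable {T : H → H} {α : ℝ} {x : ℕ → H}

theorem km_norm_sub_sq_add_le (hT : LipschitzWith 1 T) (hα : 0 ≤ α)
    (hrec : ∀ k, x (k + 1) = (1 - α) • x k + α • T (x k)) {q : H} (hq : IsFixedPt T q) (k : ℕ) :
    ‖x (k + 1) - q‖ ^ 2 + α * (1 - α) * ‖x k - T (x k)‖ ^ 2 ≤ ‖x k - q‖ ^ 2 := by
  have hstep : x (k + 1) - q = (1 - α) • (x k - q) + α • (T (x k) - q) := by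
    rw [hrec k]; module
  have hTq : ‖T (x k) - q‖ ≤ ‖x k - q‖ := by
    simpa [hq.eq] using hT.norm_sub_le (x k) q
  rw [hstep, norm_one_sub_smul_add_smul_sq, sub_sub_sub_cancel_right]
  nlinarith [pow_le_pow_left₀ (norm_nonneg _) hTq 2]

theorem km_antitone_norm_sub (hT : LipschitzWith 1 T) (hα₀ : 0 ≤ α) (hα₁ : α ≤ 1)
    (hrec : ∀ k, x (k + 1) = (1 - α) • x k + α • T (x k)) {q : H} (hq : IsFixedPt T q) :
    Antitone fun k => ‖x k - q‖ := by
  refine antitone_nat_of_succ_le fun k => ?_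
  rw [← pow_le_pow_iff_left₀ (norm_nonneg _) (norm_nonneg _) two_ne_zero]
  have hres : 0 ≤ α * (1 - α) * ‖x k - T (x k)‖ ^ 2 := by
    have : 0 ≤ 1 - α := by linarith
    positivity
  linarith [km_norm_sub_sq_add_le hT hα₀ hrec hq k]

theorem km_tendsto_norm_sub_apply (hT : LipschitzWith 1 T) (hα : α ∈ Set.Ioo (0 : ℝ) 1)
    (hrec : ∀ k, x (k + 1) = (1 - α) • x k + α • T (x k)) {q : H} (hq : IsFixedPt T q) :
    Tendsto (fun k => ‖x k - T (x k)‖) atTop (𝓝 0) := by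
  have hc : 0 < α * (1 - α) := mul_pos hα.1 (by linarith [hα.2])
  have hsum : Summable fun k => α * (1 - α) * ‖x k - T (x k)‖ ^ 2 :=
    summable_of_succ_add_le (a := fun k => ‖x k - q‖ ^ 2) (fun k => sq_nonneg _)
      (fun k => by positivity)
      (km_norm_sub_sq_add_le hT hα.1.le hrec hq)
  have hsq := ((summable_mul_left_iff hc.ne').mp hsum).tendsto_atTop_zero
  simpa using hsq.sqrt

end KrasnoselskiiMann

end

/-- If T is nonexpansive with a fixed point and α ∈ (0,1), the KM sequence
x(k+1) = (1-α)x(k) + αT x(k) converges weakly to a fixed point of T. -/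
theorem km_weak_convergence {H : Type*} [NormedAddCommGroup H] [InnerProductSpace ℝ H]
    [CompleteSpace H]
    (T : H → H) (hT : ∀ x y, ‖T x - T y‖ ≤ ‖x - y‖)
    (hfix : ∃ x, T x = x)
    (α : ℝ) (hα : α ∈ Set.Ioo (0 : ℝ) 1)
    (x : ℕ → H) (hrec : ∀ k, x (k + 1) = (1 - α) • x k + α • T (x k)) :
    ∃ xstar : H, T xstar = xstar ∧
      ∀ φ : H →L[ℝ] ℝ,
        Filter.Tendsto (fun k => φ (x k)) Filter.atTop (nhds (φ xstar)) := by
  have hT' : LipschitzWith 1 T :=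
    LipschitzWith.of_dist_le_mul fun a b => by simpa [dist_eq_norm] using hT a b
  have hfejer (q : H) (hq : IsFixedPt T q) : Antitone fun k => ‖x k - q‖ :=
    km_antitone_norm_sub hT' hα.1.le hα.2.le hrec hq
  obtain ⟨p, hp⟩ := hfix
  have hbdd := norm_le_of_antitone_norm_sub (hfejer p hp)
  have hres := km_tendsto_norm_sub_apply hT' hα hrec hp
  exact exists_weak_tendsto_of_antitone_norm_sub (S := fixedPoints T) ⟨p, hp⟩ hfejer
    fun z ψ hψ hw => hT'.isFixedPt_of_weak_tendsto (fun j => hbdd (ψ j)) hw (hres.comp hψ)
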